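/- Let K ≥ 1, let W^init be a full-support probability vector on Fin K, let R : Fin K → ℝ, and let τ > 0. Then the minimum over all probability vectors W on Fin K of ∑_k w_k·R_k + τ·KL(W‖W^init) equals −τ·log(∑_j w_j^init·exp(−R_j/τ)). -/

import Mathlib

/-! Tilting `Winit` by `exp (-R / τ)` gives the Gibbs vector `W⋆ = Winit · exp (-R / τ) / Z`, and for
every probability vector `W` the objective equals `-τ log Z + τ KL(W ‖ W⋆)`. Gibbs' inequality
`KL ≥ 0` bounds it below by `-τ log Z`, with equality at `W = W⋆`. -/

open Finset Real

/-- Kullback–Leibler divergence between finitely supported probability vectors.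
Terms with `p y = 0` vanish since `0 * log _ = 0`. -/
noncomputable def KL {Y : Type*} [Fintype Y] (p q : Y → ℝ) : ℝ :=
  ∑ y, p y * Real.log (p y / q y)

section KL

variable {ι : Type*} [Fintype ι]

@[simp]
lemma KL_self (p : ι → ℝ) : KL p p = 0 := by
  refine Finset.sum_eq_zero fun y _ => ?_
  rcases eq_or_ne (p y) 0 with h | h <;> simp [h]

lemma sub_le_mul_log_div {p q : ℝ} (hp : 0 ≤ p) (hq : 0 < q) : p - q ≤ p * log (p / q) := by
  have h := mul_nonneg hq.le (InformationTheory.klFun_nonneg (div_nonneg hp hq.le))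
  have hexpand : q * InformationTheory.klFun (p / q) = p * log (p / q) + q - p := by
    rw [InformationTheory.klFun_apply]
    field_simp
  linarith

lemma sum_sub_sum_le_KL {p q : ι → ℝ} (hp : ∀ y, 0 ≤ p y) (hq : ∀ y, 0 < q y) :
    ∑ y, p y - ∑ y, q y ≤ KL p q := by
  rw [← Finset.sum_sub_distrib]
  exact Finset.sum_le_sum fun y _ => sub_le_mul_log_div (hp y) (hq y)

lemma KL_nonneg {p q : ι → ℝ} (hp : ∀ y, 0 ≤ p y) (hq : ∀ y, 0 < q y)
    (hsum : ∑ y, q y ≤ ∑ y, p y) : 0 ≤ KL p q :=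
  (sub_nonneg.mpr hsum).trans (sum_sub_sum_le_KL hp hq)

end KL

section Gibbs

variable {ι : Type*} [Fintype ι]

noncomputable def partitionFn (q R : ι → ℝ) (τ : ℝ) : ℝ :=
  ∑ j, q j * exp (-R j / τ)

noncomputable def gibbs (q R : ι → ℝ) (τ : ℝ) (k : ι) : ℝ :=
  q k * exp (-R k / τ) / partitionFn q R τ

variable {q : ι → ℝ} (R : ι → ℝ) (τ : ℝ)

lemma partitionFn_pos [Nonempty ι] (hq : ∀ k, 0 < q k) : 0 < partitionFn q R τ :=
  Finset.sum_pos (fun j _ => mul_pos (hq j) (exp_pos _)) Finset.univ_nonempty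

variable [Nonempty ι]

lemma gibbs_pos (hq : ∀ k, 0 < q k) (k : ι) : 0 < gibbs q R τ k :=
  div_pos (mul_pos (hq k) (exp_pos _)) (partitionFn_pos R τ hq)

lemma sum_gibbs (hq : ∀ k, 0 < q k) : ∑ k, gibbs q R τ k = 1 := by
  simp only [gibbs, ← Finset.sum_div]
  exact div_self (partitionFn_pos R τ hq).ne'

lemma mul_add_mul_log_div_eq (hq : ∀ k, 0 < q k) (hτ : τ ≠ 0) {w : ℝ} (k : ι) :
    w * R k + τ * (w * log (w / q k))
      = -τ * log (partitionFn q R τ) * w + τ * (w * log (w / gibbs q R τ k)) := by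
  rcases eq_or_ne w 0 with rfl | hw
  · simp
  have hZ := (partitionFn_pos R τ hq).ne'
  have hlog : log (w / gibbs q R τ k) = log (w / q k) + R k / τ + log (partitionFn q R τ) := by
    rw [gibbs, div_div_eq_mul_div, log_div (mul_ne_zero hw hZ) (mul_pos (hq k) (exp_pos _)).ne',
      log_mul hw hZ, log_mul (hq k).ne' (exp_pos _).ne', log_exp, log_div hw (hq k).ne']
    ring
  rw [hlog]
  field_simp
  ring

lemma objective_eq_neg_log_partitionFn_add_KL {W : ι → ℝ} (hq : ∀ k, 0 < q k) (hτ : τ ≠ 0)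
    (hW : ∑ k, W k = 1) :
    ∑ k, W k * R k + τ * KL W q = -τ * log (partitionFn q R τ) + τ * KL W (gibbs q R τ) := by
  simp only [KL, Finset.mul_sum, ← Finset.sum_add_distrib, mul_add_mul_log_div_eq R τ hq hτ]
  rw [Finset.sum_add_distrib, ← Finset.mul_sum, hW, mul_one]

end Gibbs

theorem min_value_is_neg_log_partition_general
    (K : ℕ) (hK : 1 ≤ K)
    (Winit : Fin K → ℝ) (hWinit_pos : ∀ k, 0 < Winit k)
    (R : Fin K → ℝ) (τ : ℝ) (hτ : 0 < τ) :
    IsLeast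
      ((fun W : Fin K → ℝ => (∑ k, W k * R k) + τ * KL W Winit) ''
        {W : Fin K → ℝ | (∀ k, 0 ≤ W k) ∧ ∑ k, W k = 1})
      (-τ * Real.log (∑ j, Winit j * Real.exp (-(R j) / τ))) := by
  have : Nonempty (Fin K) := Fin.pos_iff_nonempty.mp hK
  have hgibbs_pos := gibbs_pos R τ hWinit_pos
  have hgibbs_sum := sum_gibbs R τ hWinit_pos
  change IsLeast _ (-τ * log (partitionFn Winit R τ))
  refine ⟨⟨gibbs Winit R τ, ⟨fun k => (hgibbs_pos k).le, hgibbs_sum⟩, ?_⟩, ?_⟩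
  · simp [objective_eq_neg_log_partitionFn_add_KL R τ hWinit_pos hτ.ne' hgibbs_sum]
  · rintro _ ⟨W, ⟨hW_nonneg, hW_sum⟩, rfl⟩
    dsimp only
    rw [objective_eq_neg_log_partitionFn_add_KL R τ hWinit_pos hτ.ne' hW_sum]
    have hKL := KL_nonneg hW_nonneg hgibbs_pos (hgibbs_sum.trans hW_sum.symm).le
    exact le_add_of_nonneg_right (mul_nonneg hτ.le hKL)

/-- The minimum of `∑ k, W k * R k + τ * KL(W ‖ W_init)` over probability vectors equals
`−τ * log (∑ j, W_init j * exp (−R j / τ))`, and it is attained. -/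
theorem min_value_is_neg_log_partition
    (K : ℕ) (hK : 1 ≤ K)
    (Winit : Fin K → ℝ) (hWinit_pos : ∀ k, 0 < Winit k) (hWinit_sum : ∑ k, Winit k = 1)
    (R : Fin K → ℝ) (τ : ℝ) (hτ : 0 < τ) :
    IsLeast
      ((fun W : Fin K → ℝ => (∑ k, W k * R k) + τ * KL W Winit) ''
        {W : Fin K → ℝ | (∀ k, 0 ≤ W k) ∧ ∑ k, W k = 1})
      (-τ * Real.log (∑ j, Winit j * Real.exp (-(R j) / τ))) :=
  min_value_is_neg_log_partition_general K hK Winit hWinit_pos R τ hτ
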